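/- arXiv:2209.11992 — 2 statements merged into one kernel-verified Lean document; each statement's English description precedes it below -/
import Mathlib

section
/- Let n ≥ 1 and let N₀ = N₀(n) be the Besicovitch constant for ℝ^{n+1}. Let A ⊆ B_1(0) ⊂ ℝ^{n+1}, let s : A → (0, r) be a function with r ∈ (0, 1/2], and suppose there is an integer F ≥ 0 such that every pairwise-disjoint collection of closed balls {cl(B_{s(a)}(a)) : a ∈ A'} with A' ⊆ A satisfies |A'| ≤ F. Then for the set B_r(A) = {x : dist(x, A) < r} we have ℋ^{n+1}(B_r(A)) ≤ N₀ · F · ω_{n+1} · (2r)^{n+1}, where ω_{n+1} is the volume of the unit ball in ℝ^{n+1}. -/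
/-!
A maximal `2r`-separated subset `T` of `A` has at most `F` points, since the closed balls
`closedBall a (s a)`, `a ∈ T`, are pairwise disjoint when `s < r`. By maximality the balls
`ball b (3r)`, `b ∈ T`, cover the `r`-neighbourhood of `A`, which gives the bound with
`N₀ = (3/2)^(n+1)`.
-/

open Metric MeasureTheory
open scoped ENNReal NNReal

theorem Set.encard_le_of_forall_finset_card_le {α : Type*} {s : Set α} {k : ℕ}
    (h : ∀ t : Finset α, ↑t ⊆ s → t.card ≤ k) : s.encard ≤ k := by
  by_contra! hlt
  obtain ⟨t, hts, htk⟩ := Set.exists_subset_encard_eq (Order.add_one_le_of_lt hlt)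
  have ht : t.Finite := Set.finite_of_encard_eq_coe htk
  have hcard := ht.encard_eq_coe_toFinset_card
  rw [htk] at hcard
  norm_cast at hcard
  have := h ht.toFinset (by simpa using hts)
  omega

namespace Metric

theorem packingNumber_le_of_pairwiseDisjoint_closedBall {X : Type*} [PseudoMetricSpace X]
    {A : Set X} {s : X → ℝ} {ε : ℝ≥0} {F : ℕ} (hs : ∀ a ∈ A, 2 * s a ≤ ε)
    (hF : ∀ A' : Finset X, ↑A' ⊆ A →
      (A' : Set X).PairwiseDisjoint (fun a => closedBall a (s a)) → A'.card ≤ F) :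
    packingNumber ε A ≤ F := by
  refine iSup₂_le fun C hCA => iSup_le fun hC => ?_
  refine Set.encard_le_of_forall_finset_card_le fun t htC => hF t (htC.trans hCA) ?_
  intro a ha b hb hab
  have hε : (ε : ℝ) < dist a b := by
    simpa [edist_dist] using hC (htC ha) (htC hb) hab
  refine closedBall_disjoint_closedBall ?_
  linarith [hs a (hCA (htC ha)), hs b (hCA (htC hb))]

theorem IsCover.thickening_subset_iUnion_ball {X : Type*} [PseudoMetricSpace X]
    {ε : ℝ≥0} {A C : Set X} (hC : IsCover ε A C) (δ : ℝ) :
    thickening δ A ⊆ ⋃ c ∈ C, ball c (δ + ε) := by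
  intro x hx
  obtain ⟨a, ha, hxa⟩ := mem_thickening_iff.mp hx
  obtain ⟨c, hc, hac⟩ := hC.subset_iUnion_closedBall ha |> Set.mem_iUnion₂.mp
  refine Set.mem_iUnion₂.mpr ⟨c, hc, ?_⟩
  rw [mem_closedBall] at hac
  rw [mem_ball]
  linarith [dist_triangle x a c]

end Metric

namespace MeasureTheory.Measure

theorem addHaar_thickening_le_packingNumber_mul {E : Type*} [NormedAddCommGroup E]
    [MeasurableSpace E] [BorelSpace E] (μ : Measure E) [μ.IsAddHaarMeasure]
    {A : Set E} {ε : ℝ≥0} (h : packingNumber ε A ≠ ⊤) (δ : ℝ) :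
    μ (thickening δ A) ≤ packingNumber ε A * μ (ball 0 (δ + ε)) := by
  set C := maximalSeparatedSet ε A
  have hC : C.Finite := Set.encard_ne_top_iff.mp (encard_maximalSeparatedSet h ▸ h)
  calc μ (thickening δ A) ≤ μ (⋃ c ∈ C, ball c (δ + ε)) :=
        measure_mono ((isCover_maximalSeparatedSet h).thickening_subset_iUnion_ball δ)
    _ ≤ ∑' c : C, μ (ball (c : E) (δ + ε)) := measure_biUnion_le μ hC.countable _
    _ = C.encard * μ (ball 0 (δ + ε)) := by
        simp only [addHaar_ball_center, ENNReal.tsum_const, Set.encard]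
    _ = packingNumber ε A * μ (ball 0 (δ + ε)) := by rw [encard_maximalSeparatedSet h]

end MeasureTheory.Measure

theorem low_stability_tubular_bound_general (n : ℕ) :
    ∃ N₀ : ℝ, 0 < N₀ ∧
      ∀ (A : Set (EuclideanSpace ℝ (Fin (n + 1)))) (r : ℝ), 0 < r → r ≤ 1 / 2 →
        A ⊆ ball (0 : EuclideanSpace ℝ (Fin (n + 1))) 1 →
        ∀ s : EuclideanSpace ℝ (Fin (n + 1)) → ℝ, (∀ a ∈ A, 0 < s a ∧ s a < r) →
        ∀ F : ℕ,
          (∀ A' : Finset (EuclideanSpace ℝ (Fin (n + 1))), ↑A' ⊆ A →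
            (A' : Set (EuclideanSpace ℝ (Fin (n + 1)))).PairwiseDisjoint
              (fun a => closedBall a (s a)) →
            A'.card ≤ F) →
          volume (thickening r A) ≤
            ENNReal.ofReal (N₀ * (F : ℝ) * (2 * r) ^ (n + 1)) *
              volume (ball (0 : EuclideanSpace ℝ (Fin (n + 1))) 1) := by
  refine ⟨(3 / 2) ^ (n + 1), by positivity, fun A r hr _ _ s hs F hF => ?_⟩
  have h2r : ((2 * r).toNNReal : ℝ) = 2 * r := Real.coe_toNNReal _ (by positivity)
  have hpack : packingNumber (2 * r).toNNReal A ≤ F :=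
    packingNumber_le_of_pairwiseDisjoint_closedBall
      (fun a ha => by rw [h2r]; linarith [(hs a ha).2]) hF
  have hvol := Measure.addHaar_thickening_le_packingNumber_mul volume
    (ne_top_of_le_ne_top (ENat.natCast_ne_top F) hpack) r
  rw [h2r, show r + 2 * r = 3 / 2 * (2 * r) by ring,
    Measure.addHaar_ball_of_pos _ _ (by positivity), finrank_euclideanSpace_fin] at hvol
  set V := volume (ball (0 : EuclideanSpace ℝ (Fin (n + 1))) 1)
  calc volume (thickening r A)
      ≤ (F : ℝ≥0∞) * (ENNReal.ofReal ((3 / 2 * (2 * r)) ^ (n + 1)) * V) := by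
        refine hvol.trans ?_
        gcongr
        exact_mod_cast hpack
    _ = ENNReal.ofReal ((3 / 2) ^ (n + 1) * (F : ℝ) * (2 * r) ^ (n + 1)) * V := by
        rw [mul_pow, ENNReal.ofReal_mul (by positivity), ENNReal.ofReal_mul (by positivity),
          ENNReal.ofReal_mul (by positivity), ENNReal.ofReal_natCast]
        ring

/-- Abstract form of the 'low stability radius' tubular neighbourhood bound: if every
pairwise-disjoint collection of closed balls `closedBall a (s a)`, `a ∈ A' ⊆ A`, has
cardinality at most `F`, and `0 < s < r` on `A ⊆ B₁(0)`, then the measure of the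
`r`-neighbourhood of `A` is at most `N₀ · F · ω_{n+1} · (2r)^{n+1}`, where `N₀` is the
Besicovitch constant of `ℝ^{n+1}` and `ω_{n+1}` the volume of the unit ball. -/
theorem low_stability_tubular_bound (n : ℕ) (hn : 1 ≤ n) :
    ∃ N₀ : ℝ, 0 < N₀ ∧
      ∀ (A : Set (EuclideanSpace ℝ (Fin (n + 1)))) (r : ℝ), 0 < r → r ≤ 1 / 2 →
        A ⊆ ball (0 : EuclideanSpace ℝ (Fin (n + 1))) 1 →
        ∀ s : EuclideanSpace ℝ (Fin (n + 1)) → ℝ, (∀ a ∈ A, 0 < s a ∧ s a < r) →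
        ∀ F : ℕ,
          (∀ A' : Finset (EuclideanSpace ℝ (Fin (n + 1))), ↑A' ⊆ A →
            (A' : Set (EuclideanSpace ℝ (Fin (n + 1)))).PairwiseDisjoint
              (fun a => closedBall a (s a)) →
            A'.card ≤ F) →
          volume (thickening r A) ≤
            ENNReal.ofReal (N₀ * (F : ℝ) * (2 * r) ^ (n + 1)) *
              volume (ball (0 : EuclideanSpace ℝ (Fin (n + 1))) 1) :=
  low_stability_tubular_bound_general n
end

section
/- Let n ≥ 1, 0 < a < b < ∞, γ ∈ (0,1), and let A ⊆ B_1(0) ⊂ ℝ^{n+1} with a function s : A → [a, b]. Suppose there is an integer F ≥ 1 such that every pairwise-disjoint collection of closed balls {cl(B_{s(x)}(x)) : x ∈ A'}, A' ⊆ A, has cardinality at most F. Then there exists a finite set B ⊆ A such that A ⊆ ⋃_{y ∈ B} B_{γ s(y)}(y) and |B| ≤ C(n) · F · (b/a)^{n+1} · (1 + γ^{-1})^{n+1}, where C(n) depends only on n. -/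
/-!
A maximal `γa/2`-separated subset `T` of `A` is finite (`A` is bounded) and covers `A` by the
balls `ball y (γ s y)`. Inside `T` choose a maximal subfamily `D` whose balls
`closedBall y (s y)` are disjoint: then `|D| ≤ F`, and every point of `T` lies within `2b` of `D`.
By volume comparison, a `γa/2`-separated set in a ball of radius `2b` has at most
`(1 + 8b/(γa))^(n+1) ≤ (8 (b/a) (1 + γ⁻¹))^(n+1)` points, so `|T| ≤ F (8 (b/a) (1 + γ⁻¹))^(n+1)`.
-/

open Metric MeasureTheory Module
open scoped NNReal ENNReal

namespace Metric

lemma IsSeparated.lt_dist {X : Type*} [PseudoMetricSpace X] {ε : ℝ≥0} {s : Set X}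
    (hs : IsSeparated ε s) {x y : X} (hx : x ∈ s) (hy : y ∈ s) (hxy : x ≠ y) :
    ε < dist x y := by
  have : (ε : ℝ≥0∞) < edist x y := hs hx hy hxy
  rw [edist_nndist, ENNReal.coe_lt_coe] at this
  exact_mod_cast this

end Metric

lemma TotallyBounded.packingNumber_ne_top {X : Type*} [PseudoEMetricSpace X] {A : Set X}
    (hA : TotallyBounded A) {ε : ℝ≥0} (hε : ε ≠ 0) : packingNumber ε A ≠ ⊤ := by
  obtain ⟨N, -, hNfin, hN⟩ := exists_finite_isCover_of_totallyBounded (ε := ε / 2)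
    (by simpa using hε) hA
  refine ne_top_of_le_ne_top (Set.encard_ne_top_iff.2 hNfin) ?_
  calc packingNumber ε A = packingNumber (2 * (ε / 2)) A := by rw [mul_div_cancel₀ _ two_ne_zero]
    _ ≤ externalCoveringNumber (ε / 2) A := packingNumber_two_mul_le_externalCoveringNumber _ _
    _ ≤ N.encard := hN.externalCoveringNumber_le_encard

lemma TotallyBounded.exists_finset_isSeparated_isCover {X : Type*} [PseudoEMetricSpace X]
    {A : Set X} (hA : TotallyBounded A) {ε : ℝ≥0} (hε : ε ≠ 0) :
    ∃ T : Finset X, ↑T ⊆ A ∧ IsSeparated ε (T : Set X) ∧ IsCover ε A T := by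
  have h := hA.packingNumber_ne_top hε
  have hfin : (maximalSeparatedSet ε A).Finite := by
    rw [← Set.encard_ne_top_iff, encard_maximalSeparatedSet h]
    exact h
  refine ⟨hfin.toFinset, ?_, ?_, ?_⟩ <;> rw [hfin.coe_toFinset]
  exacts [maximalSeparatedSet_subset, isSeparated_maximalSeparatedSet,
    isCover_maximalSeparatedSet h]

theorem Finset.exists_pairwiseDisjoint_forall_not_disjoint {ι α : Type*} (T : Finset ι)
    (f : ι → Set α) : ∃ D ⊆ T, (D : Set ι).PairwiseDisjoint f ∧
      ∀ t ∈ T, t ∉ D → ∃ d ∈ D, ¬Disjoint (f t) (f d) := by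
  classical
  obtain ⟨D, hD⟩ := Finset.exists_maximal
    (s := T.powerset.filter fun D : Finset ι => (D : Set ι).PairwiseDisjoint f) ⟨∅, by simp⟩
  simp only [Finset.mem_filter, Finset.mem_powerset] at hD
  obtain ⟨⟨hDT, hDdisj⟩, hDmax⟩ := hD
  refine ⟨D, hDT, hDdisj, fun t ht htD => ?_⟩
  by_contra! h
  have hins : (insert t D : Set ι).PairwiseDisjoint f :=
    Set.pairwiseDisjoint_insert.2 ⟨hDdisj, fun d hd _ => h d hd⟩
  have := hDmax (y := insert t D) ⟨Finset.insert_subset ht hDT, by simpa using hins⟩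
    (Finset.subset_insert t D)
  exact htD (this (Finset.mem_insert_self t D))

theorem Finset.exists_pairwiseDisjoint_closedBall_forall_dist_le {X : Type*} [PseudoMetricSpace X]
    (T : Finset X) (r : X → ℝ) (hr : ∀ t ∈ T, 0 ≤ r t) :
    ∃ D ⊆ T, (D : Set X).PairwiseDisjoint (fun x => closedBall x (r x)) ∧
      ∀ t ∈ T, ∃ d ∈ D, dist t d ≤ r t + r d := by
  obtain ⟨D, hDT, hDdisj, hD⟩ := T.exists_pairwiseDisjoint_forall_not_disjoint
    (fun x => closedBall x (r x))
  refine ⟨D, hDT, hDdisj, fun t ht => ?_⟩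
  by_cases htD : t ∈ D
  · exact ⟨t, htD, by simpa using add_nonneg (hr t ht) (hr t ht)⟩
  · obtain ⟨d, hd, hmeet⟩ := hD t ht htD
    exact ⟨d, hd, dist_le_add_of_nonempty_closedBall_inter_closedBall
      (Set.not_disjoint_iff_nonempty_inter.1 hmeet)⟩

section Packing

variable {E : Type*} [NormedAddCommGroup E] [NormedSpace ℝ E] [FiniteDimensional ℝ E]

theorem Finset.card_le_of_isSeparated_of_subset_closedBall {ε : ℝ≥0} (hε : 0 < ε) {S : Finset E}
    {c : E} {R : ℝ} (hR : 0 ≤ R) (hS : (S : Set E) ⊆ closedBall c R)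
    (hsep : IsSeparated ε (S : Set E)) :
    (S.card : ℝ) ≤ ((R + ε / 2) / (ε / 2)) ^ finrank ℝ E := by
  borelize E
  let μ : Measure E := Measure.addHaar
  set r : ℝ := ε / 2
  have hr : 0 < r := by positivity
  have hdisj : (S : Set E).PairwiseDisjoint (ball · r) := fun x hx y hy hxy =>
    ball_disjoint_ball <| (add_halves (ε : ℝ)).le.trans (hsep.lt_dist hx hy hxy).le
  have hsub : ⋃ x ∈ S, ball x r ⊆ ball c (R + r) := by
    refine Set.iUnion₂_subset fun x hx => ball_subset_ball' ?_
    linarith [mem_closedBall.1 (hS hx)]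
  have key : (S.card : ℝ≥0∞) * μ (ball 0 r) ≤ μ (ball 0 (R + r)) :=
    calc (S.card : ℝ≥0∞) * μ (ball 0 r) = ∑ x ∈ S, μ (ball x r) := by
          simp [Measure.addHaar_ball_center μ]
      _ = μ (⋃ x ∈ S, ball x r) := (measure_biUnion_finset hdisj fun _ _ => measurableSet_ball).symm
      _ ≤ μ (ball c (R + r)) := measure_mono hsub
      _ = μ (ball 0 (R + r)) := Measure.addHaar_ball_center μ c _
  rw [Measure.addHaar_ball_of_pos μ _ hr,
    Measure.addHaar_ball_of_pos μ (r := R + r) _ (by positivity), ← mul_assoc,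
    ENNReal.mul_le_mul_iff_left (measure_ball_pos μ 0 one_pos).ne' measure_ball_lt_top.ne,
    ← ENNReal.ofReal_natCast, ← ENNReal.ofReal_mul (by positivity),
    ENNReal.ofReal_le_ofReal_iff (by positivity)] at key
  rwa [div_pow, le_div_iff₀ (by positivity)]

theorem Finset.card_le_card_mul_of_isSeparated_of_forall_dist_le {ε : ℝ≥0} (hε : 0 < ε)
    {T D : Finset E} {R : ℝ} (hR : 0 ≤ R) (hsep : IsSeparated ε (T : Set E))
    (hnear : ∀ t ∈ T, ∃ d ∈ D, dist t d ≤ R) :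
    (T.card : ℝ) ≤ D.card * ((R + ε / 2) / (ε / 2)) ^ finrank ℝ E := by
  classical
  have hcover : T ⊆ D.biUnion fun d => T.filter (dist · d ≤ R) := fun t ht => by
    obtain ⟨d, hd, htd⟩ := hnear t ht
    exact Finset.mem_biUnion.2 ⟨d, hd, Finset.mem_filter.2 ⟨ht, htd⟩⟩
  calc (T.card : ℝ) ≤ ∑ d ∈ D, ((T.filter (dist · d ≤ R)).card : ℝ) := by
        exact_mod_cast (Finset.card_le_card hcover).trans Finset.card_biUnion_le
    _ ≤ ∑ _d ∈ D, ((R + ε / 2) / (ε / 2)) ^ finrank ℝ E := by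
        refine Finset.sum_le_sum fun d _ => Finset.card_le_of_isSeparated_of_subset_closedBall hε hR
          (fun t ht => (Finset.mem_filter.1 ht).2)
          (hsep.subset (Finset.coe_subset.2 (Finset.filter_subset _ T)))
    _ = D.card * ((R + ε / 2) / (ε / 2)) ^ finrank ℝ E := by simp

theorem Finset.card_le_of_isSeparated_of_pairwiseDisjoint_closedBall_card_le {ε : ℝ≥0}
    (hε : 0 < ε) {T : Finset E} (hsep : IsSeparated ε (T : Set E)) {r : E → ℝ} {ρ : ℝ}
    (hρ : 0 ≤ ρ) (hr : ∀ t ∈ T, r t ∈ Set.Icc 0 ρ) {F : ℕ}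
    (hF : ∀ D ⊆ T, (D : Set E).PairwiseDisjoint (fun x => closedBall x (r x)) → D.card ≤ F) :
    (T.card : ℝ) ≤ F * ((2 * ρ + ε / 2) / (ε / 2)) ^ finrank ℝ E := by
  obtain ⟨D, hDT, hDdisj, hDnear⟩ :=
    T.exists_pairwiseDisjoint_closedBall_forall_dist_le r fun t ht => (hr t ht).1
  have hnear : ∀ t ∈ T, ∃ d ∈ D, dist t d ≤ 2 * ρ := fun t ht => by
    obtain ⟨d, hd, htd⟩ := hDnear t ht
    exact ⟨d, hd, by linarith [(hr t ht).2, (hr d (hDT hd)).2]⟩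
  calc (T.card : ℝ) ≤ D.card * ((2 * ρ + ε / 2) / (ε / 2)) ^ finrank ℝ E :=
        T.card_le_card_mul_of_isSeparated_of_forall_dist_le hε (by positivity) hsep hnear
    _ ≤ F * ((2 * ρ + ε / 2) / (ε / 2)) ^ finrank ℝ E := by
        gcongr
        exact hF D hDT hDdisj

end Packing

theorem covering_lemma_general (n : ℕ) :
    ∃ C : ℝ, 0 < C ∧
      ∀ a b γ : ℝ, 0 < a → a < b → γ ∈ Set.Ioo (0 : ℝ) 1 →
      ∀ A : Set (EuclideanSpace ℝ (Fin (n + 1))),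
        A ⊆ ball (0 : EuclideanSpace ℝ (Fin (n + 1))) 1 →
      ∀ s : EuclideanSpace ℝ (Fin (n + 1)) → ℝ, (∀ x ∈ A, s x ∈ Set.Icc a b) →
      ∀ F : ℕ, 1 ≤ F →
        (∀ A' : Finset (EuclideanSpace ℝ (Fin (n + 1))), ↑A' ⊆ A →
          (A' : Set (EuclideanSpace ℝ (Fin (n + 1)))).PairwiseDisjoint
            (fun x => closedBall x (s x)) →
          A'.card ≤ F) →
        ∃ B : Finset (EuclideanSpace ℝ (Fin (n + 1))), ↑B ⊆ A ∧
          (A ⊆ ⋃ y ∈ B, ball y (γ * s y)) ∧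
          (B.card : ℝ) ≤ C * (F : ℝ) * (b / a) ^ (n + 1) * (1 + γ⁻¹) ^ (n + 1) := by
  refine ⟨8 ^ (n + 1), by positivity, ?_⟩
  rintro a b γ ha hab ⟨hγ, -⟩ A hA s hs F - hdisjF
  have hb : 0 < b := ha.trans hab
  -- `IsCover` only yields `dist ≤ ε`, so `ε` is taken strictly below `γ a`.
  obtain ⟨ε, hε_def⟩ : ∃ ε : ℝ≥0, (ε : ℝ) = γ * a / 2 := ⟨⟨γ * a / 2, by positivity⟩, rfl⟩
  have hε : 0 < ε := NNReal.coe_pos.1 (hε_def ▸ by positivity)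
  have hAtb : TotallyBounded A := (isCompact_closedBall _ 1).totallyBounded.subset
    (hA.trans ball_subset_closedBall)
  obtain ⟨T, hTA, hTsep, hTcover⟩ := hAtb.exists_finset_isSeparated_isCover hε.ne'
  have hcard := T.card_le_of_isSeparated_of_pairwiseDisjoint_closedBall_card_le hε hTsep hb.le
    (fun t ht => Set.Icc_subset_Icc_left ha.le (hs t (hTA ht)))
    fun D hD => hdisjF D ((Finset.coe_subset.2 hD).trans hTA)
  have hratio : (2 * b + ε / 2) / (ε / 2) ≤ 8 * (b / a * (1 + γ⁻¹)) := by
    have : 8 * (b / a * (1 + γ⁻¹)) * (γ * a / 2 / 2) = 2 * b + 2 * b * γ := by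
      field_simp
      ring
    rw [hε_def, div_le_iff₀ (by positivity), this]
    nlinarith [mul_le_mul_of_nonneg_left hab.le hγ.le]
  refine ⟨T, hTA, fun x hx => ?_, ?_⟩
  · obtain ⟨y, hy, hxy⟩ := Set.mem_iUnion₂.1 (isCover_iff_subset_iUnion_closedBall.1 hTcover hx)
    refine Set.mem_iUnion₂.2 ⟨y, hy, mem_ball.2 ?_⟩
    calc dist x y ≤ γ * a / 2 := hε_def ▸ hxy
      _ < γ * a := by linarith [mul_pos hγ ha]
      _ ≤ γ * s y := mul_le_mul_of_nonneg_left (hs y (hTA hy)).1 hγ.le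
  · rw [finrank_euclideanSpace_fin] at hcard
    calc (T.card : ℝ) ≤ F * (8 * (b / a * (1 + γ⁻¹))) ^ (n + 1) := by
          refine hcard.trans ?_
          gcongr
      _ = 8 ^ (n + 1) * F * (b / a) ^ (n + 1) * (1 + γ⁻¹) ^ (n + 1) := by
          rw [mul_pow, mul_pow]; ring

/-- Key covering lemma: if `s : A → [a,b]` and every pairwise-disjoint collection of
closed balls `closedBall x (s x)` with centres in `A` has cardinality at most `F`, then
there is a finite set `B ⊆ A` with `A ⊆ ⋃_{y ∈ B} ball y (γ s y)` and
`|B| ≤ C(n) · F · (b/a)^{n+1} · (1 + γ⁻¹)^{n+1}`. -/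
theorem covering_lemma (n : ℕ) (hn : 1 ≤ n) :
    ∃ C : ℝ, 0 < C ∧
      ∀ a b γ : ℝ, 0 < a → a < b → γ ∈ Set.Ioo (0 : ℝ) 1 →
      ∀ A : Set (EuclideanSpace ℝ (Fin (n + 1))),
        A ⊆ ball (0 : EuclideanSpace ℝ (Fin (n + 1))) 1 →
      ∀ s : EuclideanSpace ℝ (Fin (n + 1)) → ℝ, (∀ x ∈ A, s x ∈ Set.Icc a b) →
      ∀ F : ℕ, 1 ≤ F →
        (∀ A' : Finset (EuclideanSpace ℝ (Fin (n + 1))), ↑A' ⊆ A →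
          (A' : Set (EuclideanSpace ℝ (Fin (n + 1)))).PairwiseDisjoint
            (fun x => closedBall x (s x)) →
          A'.card ≤ F) →
        ∃ B : Finset (EuclideanSpace ℝ (Fin (n + 1))), ↑B ⊆ A ∧
          (A ⊆ ⋃ y ∈ B, ball y (γ * s y)) ∧
          (B.card : ℝ) ≤ C * (F : ℝ) * (b / a) ^ (n + 1) * (1 + γ⁻¹) ^ (n + 1) :=
  covering_lemma_general n
end
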